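/- For every (k,m) ∈ ℕ × ℕ*: (i) the image F_{k,m}(C(F_{k,m})) of the critical set is contained in Δ_{k,m}; (ii) F_{k,m}(Δ_{k,m}) ⊆ Δ_{k,m}; and consequently (iii) the post-critical set PC(F_{k,m}) = ⋃_{j≥1} F_{k,m}^{∘j}(C(F_{k,m})) is contained in Δ_{k,m}. -/

import Mathlib

noncomputable section

/-- Model of the space `𝓔 = ℂ^{ℕ*}` of complex sequences `(x_i)_{i ≥ 1}`:
functions `ℕ → ℂ` with a dummy coordinate `x 0` which encodes the convention `x₀ := 0`. -/
abbrev Eseq : Type := ℕ → ℂ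

/-- The submodule of `ℕ → ℂ` corresponding to `𝓔` (dummy coordinate `0` vanishes). -/
def E0 : Submodule ℂ Eseq where
  carrier := {x | x 0 = 0}
  add_mem' := by
    rintro a b ha hb
    simp only [Set.mem_setOf_eq, Pi.add_apply] at *
    rw [ha, hb]; ring
  zero_mem' := rfl
  smul_mem' := by
    rintro c a ha
    simp only [Set.mem_setOf_eq, Pi.smul_apply] at *
    rw [ha, smul_zero]

/-- `𝓛`: the subspace of constant sequences. -/
def Lconst : Submodule ℂ Eseq where
  carrier := {x | x 0 = 0 ∧ ∀ i, 1 ≤ i → x i = x 1}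
  add_mem' := by
    rintro a b ⟨ha0, ha⟩ ⟨hb0, hb⟩
    exact ⟨by simp [ha0, hb0], fun i hi => by simp only [Pi.add_apply, ha i hi, hb i hi]⟩
  zero_mem' := ⟨rfl, fun i _ => rfl⟩
  smul_mem' := by
    rintro c a ⟨ha0, ha⟩
    exact ⟨by simp [ha0], fun i hi => by simp only [Pi.smul_apply, ha i hi]⟩

/-- `ℋ_{k,m} = {x ∈ 𝓔 : β x_{k+m} − x_k = 0}` (convention `x₀ := 0`). -/
def Hspace (β : ℂ) (k m : ℕ) : Submodule ℂ Eseq where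
  carrier := {x | x 0 = 0 ∧ β * x (k + m) - x k = 0}
  add_mem' := by
    rintro a b ⟨ha0, ha⟩ ⟨hb0, hb⟩
    refine ⟨by simp [ha0, hb0], ?_⟩
    simp only [Pi.add_apply]
    linear_combination ha + hb
  zero_mem' := ⟨rfl, by simp⟩
  smul_mem' := by
    rintro c a ⟨ha0, ha⟩
    refine ⟨by simp [ha0], ?_⟩
    simp only [Pi.smul_apply, smul_eq_mul]
    linear_combination c * ha

/-- `𝓟_{k,m} = {x ∈ 𝓔 : x_{i+m} = x_i for all i ≥ k+1}`. -/
def Pspace (k m : ℕ) : Submodule ℂ Eseq where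
  carrier := {x | x 0 = 0 ∧ ∀ i, k + 1 ≤ i → x (i + m) = x i}
  add_mem' := by
    rintro a b ⟨ha0, ha⟩ ⟨hb0, hb⟩
    exact ⟨by simp [ha0, hb0], fun i hi => by simp only [Pi.add_apply, ha i hi, hb i hi]⟩
  zero_mem' := ⟨rfl, fun i _ => rfl⟩
  smul_mem' := by
    rintro c a ⟨ha0, ha⟩
    exact ⟨by simp [ha0], fun i hi => by simp only [Pi.smul_apply, ha i hi]⟩

/-- `ℳ_{k,m} = 𝓟_{k,m} ∩ ℋ_{k,m}`. -/
def Mspace (β : ℂ) (k m : ℕ) : Submodule ℂ Eseq := Pspace k m ⊓ Hspace β k m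

/-- `Q : 𝓔 → 𝓔`, `Q(x)_1 = 0`, `Q(x)_i = x_{i-1}^d` for `i ≥ 2`. -/
def Qmap (d : ℕ) (x : Eseq) : Eseq := fun i => if 2 ≤ i then (x (i - 1)) ^ d else 0

/-- The constant subtracted by the projection `π_{k,m}` onto `ℋ_{k,m}` parallel to `𝓛`. -/
def kappa (β : ℂ) (k m : ℕ) (x : Eseq) : ℂ :=
  if k = 0 then x m else (β * x (k + m) - x k) / (β - 1)

/-- `π_{k,m} : 𝓔 → 𝓔`, the projection onto `ℋ_{k,m}` parallel to `𝓛`. -/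
def projH (β : ℂ) (k m : ℕ) (x : Eseq) : Eseq :=
  fun i => if i = 0 then 0 else x i - kappa β k m x

/-- `F_{k,m} = π_{k,m} ∘ Q`. -/
def Fmap (β : ℂ) (d k m : ℕ) (x : Eseq) : Eseq := projH β k m (Qmap d x)

/-- The coordinate linear form `ω_i` on `ℳ_{k,m}`. -/
def omegaForm (β : ℂ) (k m : ℕ) (i : ℕ) : Module.Dual ℂ (Mspace β k m) where
  toFun v := (v : Eseq) i
  map_add' a b := rfl
  map_smul' c a := rfl

/-- `L` is the derivative `D_x F_{k,m} : ℳ_{k,m} → ℳ_{k,m}` of `F_{k,m}` at `x`: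
in every direction `v ∈ ℳ_{k,m}` and coordinate `i`, `L v` is the derivative at `t = 0`
of `t ↦ F_{k,m}(x + t v)_i`. -/
def IsDerivAt (β : ℂ) (d k m : ℕ) (x : Eseq)
    (L : Mspace β k m →ₗ[ℂ] Mspace β k m) : Prop :=
  ∀ v : Mspace β k m, ∀ i : ℕ,
    ((L v : Eseq) i) = deriv (fun t : ℂ => Fmap β d k m (x + t • (v : Eseq)) i) 0

/-- The critical set `C(F_{k,m})`: points of `ℳ_{k,m}` where the derivative is not invertible. -/
def CsetD (β : ℂ) (d k m : ℕ) : Set Eseq :=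
  {x | x ∈ Mspace β k m ∧
    ∀ L : Mspace β k m →ₗ[ℂ] Mspace β k m, IsDerivAt β d k m x L → ¬ Function.Bijective L}

/-- The post-critical set `PC(F_{k,m}) = ⋃_{j ≥ 1} F_{k,m}^{∘j}(C(F_{k,m}))`. -/
def PCsetD (β : ℂ) (d k m : ℕ) : Set Eseq :=
  ⋃ j : ℕ, ⋃ _ : 1 ≤ j, (Fmap β d k m)^[j] '' CsetD β d k m

/-- `Δ_{k,m} = {x ∈ ℳ_{k,m} : x_i = x_j for some 1 ≤ i < j ≤ k+m}`. -/
def Delta (β : ℂ) (k m : ℕ) : Set Eseq :=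
  {x | x ∈ Mspace β k m ∧ ∃ i j : ℕ, 1 ≤ i ∧ i < j ∧ j ≤ k + m ∧ x i = x j}

/-- Coordinates of a point of `ℂ^n`, indexed from `1` to `n`, with the convention `x₀ := 0`
(and value `0` out of range). -/
def coordFin {n : ℕ} (x : Fin n → ℂ) (i : ℕ) : ℂ :=
  if h : 1 ≤ i ∧ i ≤ n then x ⟨i - 1, by omega⟩ else 0

/-- The Koch map `G_{k,m} : ℂ^{k+m-1} → ℂ^{k+m-1}`. -/
def Gmap (β : ℂ) (d k m : ℕ) (x : Fin (k + m - 1) → ℂ) : Fin (k + m - 1) → ℂ :=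
  if k = 0 then
    fun j => (coordFin x j.1) ^ d - (coordFin x (m - 1)) ^ d
  else
    fun j =>
      (coordFin x j.1 - (β * coordFin x (k + m - 1) - coordFin x (k - 1)) / (β - 1)) ^ d

/-- The critical set `C(G_{k,m})`: points where the derivative is not invertible. -/
def Gcrit (β : ℂ) (d k m : ℕ) : Set (Fin (k + m - 1) → ℂ) :=
  {z | ¬ Function.Bijective (fderiv ℂ (Gmap β d k m) z)}

/-- The post-critical set `PC(G_{k,m}) = ⋃_{j ≥ 1} G_{k,m}^{∘j}(C(G_{k,m}))`. -/
def GPC (β : ℂ) (d k m : ℕ) : Set (Fin (k + m - 1) → ℂ) :=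
  ⋃ j : ℕ, ⋃ _ : 1 ≤ j, (Gmap β d k m)^[j] '' Gcrit β d k m

/-- The polynomial `P_z` associated to a point `z ∈ ℂ^{k+m-1}`. -/
def Ppoly (β : ℂ) (d k m : ℕ) (z : Fin (k + m - 1) → ℂ) : ℂ → ℂ :=
  if k = 0 then fun t => t ^ d - (coordFin z (m - 1)) ^ d
  else fun t => (t - (β * coordFin z (k + m - 1) - coordFin z (k - 1)) / (β - 1)) ^ d

/-! Off the hyperplanes `x_i = 0`, `1 ≤ i < k + m`, the derivative `π_{k,m} ∘ Q'(x)` of `F_{k,m}`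
is injective on `ℳ_{k,m}`, hence bijective since `ℳ_{k,m}` is finite-dimensional; so a critical
point has such a vanishing coordinate. Since `F(x)_{i+1} = x_i ^ d - κ(Q x)` for `i ≥ 0`, any
coincidence `x_i = x_j` (including `x_i = 0 = x_0`) gives `F(x)_{i+1} = F(x)_{j+1}`; when
`j = k + m` the index is brought back into range by the periodicity of `F(x) ∈ 𝓟_{k,m}`. Thus
`F_{k,m}` maps both `C(F_{k,m})` and `Δ_{k,m}` into `Δ_{k,m}`, and the post-critical set follows
by iteration. -/

section

variable {β : ℂ} {d k m : ℕ} {x v y : Eseq}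

theorem Mspace.apply_zero (hx : x ∈ Mspace β k m) : x 0 = 0 := hx.1.1

theorem Mspace.apply_add_period (hx : x ∈ Mspace β k m) {i : ℕ} (hi : k + 1 ≤ i) :
    x (i + m) = x i :=
  hx.1.2 i hi

theorem Mspace.beta_mul_apply (hx : x ∈ Mspace β k m) : β * x (k + m) = x k :=
  sub_eq_zero.mp hx.2.2

theorem Mspace.le_Pspace : Mspace β k m ≤ Pspace k m := inf_le_left

/-- For `j = k` this is where `β ^ d = 1` enters, via `x_k = β x_{k+m}` and `v_k = β v_{k+m}`. -/
theorem Mspace.pow_pred_mul_apply_add_period (hd : d ≠ 0) (hβd : β ^ d = 1)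
    (hx : x ∈ Mspace β k m) (hv : v ∈ Mspace β k m) {j : ℕ} (hj : k ≤ j) :
    x (j + m) ^ (d - 1) * v (j + m) = x j ^ (d - 1) * v j := by
  rcases hj.eq_or_lt with rfl | hj
  · rw [← Mspace.beta_mul_apply hx, ← Mspace.beta_mul_apply hv, mul_pow, mul_mul_mul_comm,
      pow_sub_one_mul hd, hβd, one_mul]
  · rw [Mspace.apply_add_period hx hj, Mspace.apply_add_period hv hj]

theorem Mspace.pow_apply_add_period (hd : d ≠ 0) (hβd : β ^ d = 1)
    (hx : x ∈ Mspace β k m) {j : ℕ} (hj : k ≤ j) : x (j + m) ^ d = x j ^ d := by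
  rw [← pow_sub_one_mul hd, ← pow_sub_one_mul hd,
    Mspace.pow_pred_mul_apply_add_period hd hβd hx hx hj]

theorem Pspace.eq_zero_of_forall_le (hm : m ≠ 0) (hv : v ∈ Pspace k m)
    (h : ∀ j ≤ k + m, v j = 0) : v = 0 := by
  funext j
  induction j using Nat.strong_induction_on with
  | _ j ih =>
    by_cases hj : j ≤ k + m
    · exact h j hj
    · obtain ⟨i, rfl⟩ : ∃ i, j = i + m := ⟨j - m, by omega⟩
      rw [hv.2 i (by omega)]
      exact ih i (by omega)

instance Pspace.finiteDimensional [NeZero m] : FiniteDimensional ℂ (Pspace k m) := by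
  refine FiniteDimensional.of_injective
    ((LinearMap.funLeft ℂ ℂ (Fin.val : Fin (k + m + 1) → ℕ)) ∘ₗ (Pspace k m).subtype) ?_
  rw [← LinearMap.ker_eq_bot, LinearMap.ker_eq_bot']
  intro v hv
  refine Subtype.ext (Pspace.eq_zero_of_forall_le (NeZero.ne m) v.2 fun j hj => ?_)
  exact congrFun hv ⟨j, by omega⟩

instance Mspace.finiteDimensional [NeZero m] : FiniteDimensional ℂ (Mspace β k m) :=
  Submodule.finiteDimensional_of_le Mspace.le_Pspace

theorem Qmap_succ (hd : d ≠ 0) (hx : x 0 = 0) (i : ℕ) : Qmap d x (i + 1) = x i ^ d := by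
  rcases i with _ | i
  · simp [Qmap, hx, hd]
  · simp [Qmap]

theorem Qmap_mem_Pspace (hd : d ≠ 0) (hβd : β ^ d = 1) (hx : x ∈ Mspace β k m) :
    Qmap d x ∈ Pspace k m := by
  refine ⟨by simp [Qmap], fun i hi => ?_⟩
  obtain ⟨j, rfl⟩ : ∃ j, i = j + 1 := ⟨i - 1, by omega⟩
  rw [add_right_comm, Qmap_succ hd (Mspace.apply_zero hx), Qmap_succ hd (Mspace.apply_zero hx),
    Mspace.pow_apply_add_period hd hβd hx (by omega)]

def derivQmap (d : ℕ) (x : Eseq) : Eseq →ₗ[ℂ] Eseq where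
  toFun v i := if 2 ≤ i then d * x (i - 1) ^ (d - 1) * v (i - 1) else 0
  map_add' v w := by
    funext i
    simp only [Pi.add_apply]
    split_ifs <;> ring
  map_smul' c v := by
    funext i
    simp only [Pi.smul_apply, smul_eq_mul, RingHom.id_apply]
    split_ifs <;> ring

theorem derivQmap_succ (hv : v 0 = 0) (i : ℕ) :
    derivQmap d x v (i + 1) = d * x i ^ (d - 1) * v i := by
  rcases i with _ | i
  · simp [derivQmap, hv]
  · simp [derivQmap]

theorem derivQmap_mem_Pspace (hd : d ≠ 0) (hβd : β ^ d = 1) (hx : x ∈ Mspace β k m)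
    (hv : v ∈ Mspace β k m) : derivQmap d x v ∈ Pspace k m := by
  refine ⟨by simp [derivQmap], fun i hi => ?_⟩
  obtain ⟨j, rfl⟩ : ∃ j, i = j + 1 := ⟨i - 1, by omega⟩
  rw [add_right_comm, derivQmap_succ (Mspace.apply_zero hv), derivQmap_succ (Mspace.apply_zero hv),
    mul_assoc, mul_assoc, Mspace.pow_pred_mul_apply_add_period hd hβd hx hv (by omega)]

theorem hasDerivAt_Qmap (x v : Eseq) (t₀ : ℂ) (i : ℕ) :
    HasDerivAt (fun t : ℂ => Qmap d (x + t • v) i) (derivQmap d (x + t₀ • v) v i) t₀ := by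
  by_cases hi : 2 ≤ i
  · have hline : HasDerivAt (fun t : ℂ => x (i - 1) + t * v (i - 1)) (v (i - 1)) t₀ := by
      simpa using ((hasDerivAt_id t₀).mul_const (v (i - 1))).const_add (x (i - 1))
    simpa [Qmap, derivQmap, hi] using hline.fun_pow d
  · simpa [Qmap, derivQmap, hi] using hasDerivAt_const t₀ (0 : ℂ)

def projHₗ (β : ℂ) (k m : ℕ) : Eseq →ₗ[ℂ] Eseq where
  toFun := projH β k m
  map_add' y z := by
    funext i
    simp only [projH, kappa, Pi.add_apply]
    split_ifs <;> ring
  map_smul' c y := by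
    funext i
    simp only [projH, kappa, Pi.smul_apply, smul_eq_mul, RingHom.id_apply]
    split_ifs <;> ring

theorem projH_mem_Mspace (hβ1 : β ≠ 1) (hy : y ∈ Pspace k m) :
    projH β k m y ∈ Mspace β k m := by
  refine ⟨⟨by simp [projH], fun i hi => ?_⟩, by simp [projH], ?_⟩
  · simp only [projH, if_neg (show i + m ≠ 0 by omega), if_neg (show i ≠ 0 by omega),
      hy.2 i hi]
  · have hβ1' : β - 1 ≠ 0 := sub_ne_zero.mpr hβ1
    rcases Nat.eq_zero_or_pos k with rfl | hk
    · rcases Nat.eq_zero_or_pos m with rfl | hm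
      · simp [projH]
      · simp [projH, kappa, hm.ne']
    · simp only [projH, kappa, if_neg (show k + m ≠ 0 by omega), if_neg hk.ne']
      field_simp
      ring

theorem apply_eq_of_projH_eq_zero (h : projH β k m y = 0) {i : ℕ} (hi : i ≠ 0) :
    y i = y 1 := by
  have hyi := congrFun h i
  have hy1 := congrFun h 1
  simp only [projH, if_neg hi, Pi.zero_apply, one_ne_zero, if_false] at hyi hy1
  rw [sub_eq_zero.mp hyi, sub_eq_zero.mp hy1]

theorem hasDerivAt_projH {f : ℂ → Eseq} {g : Eseq} {t₀ : ℂ}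
    (hf : ∀ j, HasDerivAt (fun t => f t j) (g j) t₀) (i : ℕ) :
    HasDerivAt (fun t => projH β k m (f t) i) (projH β k m g i) t₀ := by
  by_cases hi : i = 0
  · simpa [projH, hi] using hasDerivAt_const t₀ (0 : ℂ)
  · simp only [projH, kappa, if_neg hi]
    split_ifs
    · exact (hf i).sub (hf m)
    · exact (hf i).sub ((((hf (k + m)).const_mul β).sub (hf k)).div_const (β - 1))

theorem Fmap_mem_Mspace (hd : d ≠ 0) (hβd : β ^ d = 1) (hβ1 : β ≠ 1)
    (hx : x ∈ Mspace β k m) : Fmap β d k m x ∈ Mspace β k m :=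
  projH_mem_Mspace hβ1 (Qmap_mem_Pspace hd hβd hx)

theorem Fmap_succ (hd : d ≠ 0) (hx : x 0 = 0) (i : ℕ) :
    Fmap β d k m x (i + 1) = x i ^ d - kappa β k m (Qmap d x) := by
  simp [Fmap, projH, Qmap_succ hd hx]

theorem isDerivAt_of_coe_eq_projH_derivQmap {L : Mspace β k m →ₗ[ℂ] Mspace β k m}
    (hL : ∀ v, (L v : Eseq) = projH β k m (derivQmap d x v)) : IsDerivAt β d k m x L := by
  intro v i
  rw [hL]
  refine ((hasDerivAt_projH (fun j => ?_) i).deriv).symm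
  simpa using hasDerivAt_Qmap (d := d) x (v : Eseq) 0 j

/-- Away from the coordinate hyperplanes `x_i = 0`, `1 ≤ i < k + m`, the derivative is
injective: its kernel would consist of `v` with `Q'(x) v ∈ 𝓛`, and `Q'(x) v` vanishes at `1`. -/
theorem injective_of_apply_ne_zero (hd : d ≠ 0) (hβ0 : β ≠ 0) (hm : m ≠ 0)
    (hx : ∀ i, 1 ≤ i → i ≤ k + m - 1 → x i ≠ 0) {L : Mspace β k m →ₗ[ℂ] Mspace β k m}
    (hL : ∀ v, (L v : Eseq) = projH β k m (derivQmap d x v)) : Function.Injective L := by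
  rw [← LinearMap.ker_eq_bot, LinearMap.ker_eq_bot']
  intro v hv
  have hv0 : (v : Eseq) 0 = 0 := Mspace.apply_zero v.2
  have hproj : projH β k m (derivQmap d x v) = 0 := by rw [← hL, hv]; rfl
  have hlow : ∀ j ≤ k + m - 1, (v : Eseq) j = 0 := by
    intro j hj
    rcases Nat.eq_zero_or_pos j with rfl | hj1
    · exact hv0
    have h := apply_eq_of_projH_eq_zero hproj (i := j + 1) (by omega)
    rw [derivQmap_succ hv0] at h
    simpa [derivQmap, hd, hx j hj1 hj] using h
  have htop : (v : Eseq) (k + m) = 0 := by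
    have h := Mspace.beta_mul_apply v.2
    rwa [hlow k (by omega), mul_eq_zero, or_iff_right hβ0] at h
  refine Subtype.ext (Pspace.eq_zero_of_forall_le hm (Mspace.le_Pspace v.2) fun j hj => ?_)
  rcases (show j ≤ k + m - 1 ∨ j = k + m by omega) with hj | rfl
  · exact hlow j hj
  · exact htop

theorem exists_apply_eq_zero_of_mem_CsetD (hd : d ≠ 0) (hβd : β ^ d = 1) (hβ1 : β ≠ 1)
    (hm : m ≠ 0) (hx : x ∈ CsetD β d k m) : ∃ i, 1 ≤ i ∧ i ≤ k + m - 1 ∧ x i = 0 := by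
  by_contra! hnz
  have : NeZero m := ⟨hm⟩
  have hβ0 : β ≠ 0 := (pow_ne_zero_iff hd).mp (by rw [hβd]; exact one_ne_zero)
  let L : Mspace β k m →ₗ[ℂ] Mspace β k m := (projHₗ β k m ∘ₗ derivQmap d x).restrict
    fun v hv => projH_mem_Mspace hβ1 (derivQmap_mem_Pspace hd hβd hx.1 hv)
  have hL : ∀ v, (L v : Eseq) = projH β k m (derivQmap d x v) := fun v => rfl
  have hinj := injective_of_apply_ne_zero hd hβ0 hm hnz hL
  exact hx.2 L (isDerivAt_of_coe_eq_projH_derivQmap hL) ⟨hinj, LinearMap.injective_iff_surjective.mp hinj⟩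

/-- `i = 0` is allowed: a zero coordinate `x_j = 0 = x_0` gives `F(x)_1 = F(x)_{j+1}`. -/
theorem Fmap_mem_Delta_of_apply_eq (hd : d ≠ 0) (hβd : β ^ d = 1) (hβ1 : β ≠ 1)
    (hx : x ∈ Mspace β k m) {i j : ℕ} (hij : i < j) (hj : j < k + m) (hxij : x i = x j) :
    Fmap β d k m x ∈ Delta β k m := by
  refine ⟨Fmap_mem_Mspace hd hβd hβ1 hx, i + 1, j + 1, by omega, by omega, by omega, ?_⟩
  rw [Fmap_succ hd (Mspace.apply_zero hx), Fmap_succ hd (Mspace.apply_zero hx), hxij]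

/-- The case `j = k + m` is reduced by periodicity of `F(x)`, except when `i = k`, where
`x_k = x_{k+m} = β x_{k+m}` forces `x_k = 0`. -/
theorem Fmap_mem_Delta (hd : d ≠ 0) (hβd : β ^ d = 1) (hβ1 : β ≠ 1) (hm : m ≠ 0)
    (hx : x ∈ Delta β k m) : Fmap β d k m x ∈ Delta β k m := by
  obtain ⟨hxM, i, j, hi, hij, hj, hxij⟩ := hx
  have hx0 := Mspace.apply_zero hxM
  rcases (show j < k + m ∨ j = k + m by omega) with hj | rfl
  · exact Fmap_mem_Delta_of_apply_eq hd hβd hβ1 hxM hij hj hxij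
  by_cases hik : i = k
  · subst hik
    have hxk : x i = 0 := by
      have h : (β - 1) * x i = 0 := by
        linear_combination Mspace.beta_mul_apply hxM + β * hxij
      exact (mul_eq_zero.mp h).resolve_left (sub_ne_zero.mpr hβ1)
    exact Fmap_mem_Delta_of_apply_eq hd hβd hβ1 hxM (i := 0) (j := i) (by omega) (by omega)
      (hx0.trans hxk.symm)
  have hFM := Fmap_mem_Mspace hd hβd hβ1 hxM
  have hper : Fmap β d k m x (i + 1) = Fmap β d k m x (k + 1) := by
    rw [← Mspace.apply_add_period hFM le_rfl, add_right_comm, Fmap_succ hd hx0,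
      Fmap_succ hd hx0, hxij]
  rcases Nat.lt_or_gt_of_ne hik with h | h
  · exact ⟨hFM, i + 1, k + 1, by omega, by omega, by omega, hper⟩
  · exact ⟨hFM, k + 1, i + 1, by omega, by omega, by omega, hper.symm⟩

end

theorem Set.image_iterate_succ_subset {α : Type*} {f : α → α} {C D : Set α}
    (hC : f '' C ⊆ D) (hD : f '' D ⊆ D) (n : ℕ) : f^[n + 1] '' C ⊆ D := by
  rw [Function.iterate_succ, Set.image_comp]
  exact (Set.image_mono hC).trans ((Set.mapsTo_iff_image_subset.mpr hD).iterate n).image_subset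

/-- `F_{k,m}(C(F_{k,m})) ⊆ Δ_{k,m}`, `F_{k,m}(Δ_{k,m}) ⊆ Δ_{k,m}`, and
consequently `PC(F_{k,m}) ⊆ Δ_{k,m}`. -/
theorem stmt9 (d : ℕ) (hd : 2 ≤ d) (β : ℂ) (hβd : β ^ d = 1) (hβ1 : β ≠ 1)
    (k m : ℕ) (hm : 1 ≤ m) :
    Fmap β d k m '' CsetD β d k m ⊆ Delta β k m ∧
    Fmap β d k m '' Delta β k m ⊆ Delta β k m ∧
    PCsetD β d k m ⊆ Delta β k m := by
  have hd0 : d ≠ 0 := by omega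
  have hm0 : m ≠ 0 := by omega
  have hcrit : Fmap β d k m '' CsetD β d k m ⊆ Delta β k m := by
    rintro _ ⟨x, hx, rfl⟩
    obtain ⟨i, hi, hik, hxi⟩ := exists_apply_eq_zero_of_mem_CsetD hd0 hβd hβ1 hm0 hx
    exact Fmap_mem_Delta_of_apply_eq hd0 hβd hβ1 hx.1 (i := 0) (by omega) (by omega)
      ((Mspace.apply_zero hx.1).trans hxi.symm)
  have hdiag : Fmap β d k m '' Delta β k m ⊆ Delta β k m := by
    rintro _ ⟨x, hx, rfl⟩
    exact Fmap_mem_Delta hd0 hβd hβ1 hm0 hx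
  refine ⟨hcrit, hdiag, Set.iUnion₂_subset fun j hj => ?_⟩
  obtain ⟨n, rfl⟩ : ∃ n, j = n + 1 := ⟨j - 1, by omega⟩
  exact Set.image_iterate_succ_subset hcrit hdiag n
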